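/- Let V ∈ H₊^{−m}. The operator S₊(V) is local: if u ∈ Dom(S₊) vanishes on an open subinterval (α,β) ⊂ [0,1], then S₊(V)u vanishes on (α,β). -/

import Mathlib

/- STATEMENT 10 (locality): For V ∈ H₊^{−m}, if u ∈ Dom(S₊(V))
vanishes a.e. on a subinterval (α,β) ⊂ [0,1], then S₊(V)u vanishes
a.e. on (α,β).  The 1-periodic functions u and S₊u (both in L²) are
realized as L² functions on the circle ℝ/ℤ whose Fourier coefficients
are the sequences û, (S₊u)^; membership u ∈ Dom(S₊) and the action of
S₊ are expressed in Fourier coordinates: û ∈ H₊^m and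
(S₊u)^(k) = (2kπ)^{2m}û(k) + (V̂*û)(k). -/

noncomputable section
open Complex MeasureTheory AddCircle

instance : Fact ((0 : ℝ) < 1) := ⟨one_pos⟩

def wtp (s : ℝ) (k : ℤ) : ℝ := ((1 + |(2 * k : ℤ)| : ℝ)) ^ (2 * s)

def conv (a b : ℤ → ℂ) (k : ℤ) : ℂ := ∑' j : ℤ, a (k - j) * b j

def cplus (m : ℕ) (k : ℤ) : ℝ := (2 * Real.pi * (k : ℝ)) ^ (2 * m)

/-! Locality is read off in Fourier coordinates. For a test function `φ` supported in `(α, β)`,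
Parseval's identity on the circle turns `∫ φ W` into `∑ₖ 𝓕 φ (-k) ŵ(k)`, and an `L²` function
vanishes a.e. on `(α, β)` iff all these pairings vanish. Splitting `ŵ = (2πk)^{2m} û + V̂ * û`, the
first part is `(-1)^m` times the pairing of `û` with `φ^{(2m)}`. For the second, the rapid decay of
`𝓕 φ` and Peetre's inequality `⟨2(k - j)⟩ ≤ ⟨2k⟩⟨2j⟩` make the double series absolutely
convergent (`V ∈ H^{-m}` is paired with `u ∈ H^m`), and summing it along `k = l + j` gives
`∑ₗ V̂(l) ∑ⱼ 𝓕(e_l φ)(-j) û(j)` with `e_l(x) = e^{2πilx}`; each inner sum is the pairing of `û`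
with the test function `e_l φ`, again supported in `(α, β)`. -/

open scoped FourierTransform ContDiff Real ComplexConjugate SchwartzMap
open Set Function

theorem haarAddCircle_eq_volume : (haarAddCircle : Measure (AddCircle (1 : ℝ))) = volume := by
  rw [AddCircle.volume_eq_smul_haarAddCircle, ENNReal.ofReal_one, one_smul]

theorem integral_haarAddCircle_eq (F : AddCircle (1 : ℝ) → ℂ) :
    ∫ t, F t ∂haarAddCircle = ∫ x in Ioc (0 : ℝ) 1, F x := by
  rw [haarAddCircle_eq_volume, ← AddCircle.integral_preimage 1 0 F, zero_add]

theorem integrableOn_Ioc_comp_coe (X : Lp ℂ 2 (@haarAddCircle (1 : ℝ) _)) :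
    IntegrableOn (fun x : ℝ => X (x : AddCircle (1 : ℝ))) (Ioc 0 1) := by
  have hmp := AddCircle.measurePreserving_mk (1 : ℝ) 0
  rw [zero_add, ← haarAddCircle_eq_volume] at hmp
  exact (hmp.integrable_comp (Lp.aestronglyMeasurable X)).2 ((Lp.memLp X).integrable (by norm_num))

theorem fourierCoeff_conj (F : AddCircle (1 : ℝ) → ℂ) (k : ℤ) :
    fourierCoeff (fun t => conj (F t)) k = conj (fourierCoeff F (-k)) := by
  simp only [fourierCoeff, ← integral_conj, smul_eq_mul, map_mul, neg_neg, ← fourier_neg]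

theorem inner_fourierBasis (Y : Lp ℂ 2 (@haarAddCircle (1 : ℝ) _)) (k : ℤ) :
    inner ℂ (fourierBasis k) Y = fourierCoeff Y k := by
  rw [← fourierBasis_repr, HilbertBasis.repr_apply_apply]

theorem hasSum_fourierCoeff_mul_fourierCoeff {F : AddCircle (1 : ℝ) → ℂ}
    (hF : MemLp F 2 haarAddCircle) (X : Lp ℂ 2 (@haarAddCircle (1 : ℝ) _)) :
    HasSum (fun k : ℤ => fourierCoeff F (-k) * fourierCoeff X k)
      (∫ t, F t * X t ∂haarAddCircle) := by
  have hG : MemLp (fun t => conj (F t)) 2 haarAddCircle := hF.star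
  have hGF := hG.coeFn_toLp
  have hterm (k : ℤ) : inner ℂ hG.toLp (fourierBasis k) = fourierCoeff F (-k) := by
    rw [← inner_conj_symm, inner_fourierBasis, fourierCoeff_congr_ae hGF, fourierCoeff_conj,
      Complex.conj_conj]
  have hval : inner ℂ hG.toLp X = ∫ t, F t * X t ∂haarAddCircle := by
    rw [MeasureTheory.L2.inner_def]
    refine integral_congr_ae (hGF.mono fun t ht => ?_)
    simp [ht, mul_comm]
  simpa only [hterm, inner_fourierBasis, hval] using
    fourierBasis.hasSum_inner_mul_inner hG.toLp X

theorem fourierCoeff_liftIoc_eq_fourier {f : ℝ → ℂ} (hf : support f ⊆ Ioc 0 1) (n : ℤ) :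
    fourierCoeff (AddCircle.liftIoc 1 0 f) n = 𝓕 f n := by
  rw [fourierCoeff, integral_haarAddCircle_eq, Real.fourier_real_eq_integral_exp_smul,
    ← setIntegral_eq_integral_of_forall_compl_eq_zero (μ := volume) (s := Ioc 0 1)
      fun x hx => by rw [notMem_support.1 fun h => hx (hf h), smul_zero]]
  refine setIntegral_congr_fun measurableSet_Ioc fun x hx => ?_
  rw [AddCircle.liftIoc_zero_coe_apply hx, fourier_coe_apply]
  congr 2
  push_cast
  ring

theorem hasSum_fourier_mul_fourierCoeff {φ : ℝ → ℂ} (hφ : Continuous φ)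
    (hsupp : support φ ⊆ Ioc 0 1) (X : Lp ℂ 2 (@haarAddCircle (1 : ℝ) _)) :
    HasSum (fun k : ℤ => 𝓕 φ (-k) * fourierCoeff X k)
      (∫ x in Ioc (0 : ℝ) 1, φ x * X x) := by
  have hcs : HasCompactSupport φ := HasCompactSupport.intro isCompact_Icc fun x hx =>
    notMem_support.1 fun h => hx (Ioc_subset_Icc_self (hsupp h))
  have hmem : MemLp (AddCircle.liftIoc 1 0 φ) 2 haarAddCircle := by
    refine MemLp.haarAddCircle (MemLp.memLp_liftIoc ?_)
    rw [zero_add]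
    exact (hφ.memLp_of_hasCompactSupport hcs).restrict _
  have h := hasSum_fourierCoeff_mul_fourierCoeff hmem X
  simp only [fourierCoeff_liftIoc_eq_fourier hsupp, Int.cast_neg] at h
  convert h using 1
  rw [integral_haarAddCircle_eq]
  refine setIntegral_congr_fun measurableSet_Ioc fun x hx => ?_
  rw [AddCircle.liftIoc_zero_coe_apply hx]

/-- The distribution `∑ₖ u k e^{2πikx}` vanishes on `s`: its pairing `∑ₖ 𝓕 φ (-k) * u k` with
every test function `φ` supported in `s` is zero. -/
def FourierVanishesOn (u : ℤ → ℂ) (s : Set ℝ) : Prop :=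
  ∀ φ : ℝ → ℂ, ContDiff ℝ ∞ φ → HasCompactSupport φ → tsupport φ ⊆ s →
    HasSum (fun k : ℤ => 𝓕 φ (-k) * u k) 0

theorem fourierVanishesOn_fourierCoeff_iff (X : Lp ℂ 2 (@haarAddCircle (1 : ℝ) _))
    {s : Set ℝ} (hs : IsOpen s) (hs1 : s ⊆ Ioc 0 1) :
    FourierVanishesOn (fun k => fourierCoeff X k) s ↔
      ∀ᵐ x : ℝ ∂volume.restrict s, X (x : AddCircle (1 : ℝ)) = 0 := by
  have hpair {φ : ℝ → ℂ} (hφ : Continuous φ) (hφs : tsupport φ ⊆ s) :=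
    hasSum_fourier_mul_fourierCoeff hφ ((subset_tsupport φ).trans (hφs.trans hs1)) X
  rw [ae_restrict_iff' hs.measurableSet]
  constructor
  · intro hX
    refine hs.ae_eq_zero_of_integral_contDiff_smul_eq_zero
      ((integrableOn_Ioc_comp_coe X).mono_set hs1).locallyIntegrableOn fun g hg hgc hgs => ?_
    have hψ : ContDiff ℝ ∞ fun x => (g x : ℂ) := Complex.ofRealCLM.contDiff.comp hg
    have hψs : tsupport (fun x => (g x : ℂ)) ⊆ s :=
      (tsupport_comp_subset Complex.ofReal_zero g).trans hgs
    calc ∫ x, g x • X (x : AddCircle (1 : ℝ))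
        = ∫ x in Ioc 0 1, (g x : ℂ) * X (x : AddCircle (1 : ℝ)) := by
          rw [setIntegral_eq_integral_of_forall_compl_eq_zero fun x hx => by
            rw [image_eq_zero_of_notMem_tsupport fun h => hx (hs1 (hgs h)), Complex.ofReal_zero,
              zero_mul]]
          simp only [Complex.real_smul]
      _ = 0 := (hpair hψ.continuous hψs).unique (hX _ hψ (hgc.comp_left Complex.ofReal_zero) hψs)
  · intro hX φ hφ _ hφs
    convert hpair hφ.continuous hφs using 1
    refine (integral_eq_zero_of_ae (ae_restrict_of_ae ?_)).symm
    filter_upwards [hX] with x hx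
    by_cases hxs : x ∈ s
    · simp [hx hxs]
    · simp [image_eq_zero_of_notMem_tsupport fun h => hxs (hφs h)]

def freqWeight (k : ℤ) : ℝ := (1 + |(2 * k : ℤ)| : ℝ)

theorem wtp_eq (s : ℝ) (k : ℤ) : wtp s k = freqWeight k ^ (2 * s) := rfl

theorem freqWeight_pos (k : ℤ) : 0 < freqWeight k := by
  unfold freqWeight
  positivity

theorem freqWeight_sub_le (k j : ℤ) : freqWeight (k - j) ≤ freqWeight k * freqWeight j := by
  unfold freqWeight
  push_cast
  rw [mul_sub]
  nlinarith [abs_sub (2 * (k : ℝ)) (2 * j), abs_nonneg (2 * (k : ℝ)), abs_nonneg (2 * (j : ℝ))]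

theorem freqWeight_le (k : ℤ) : freqWeight k ≤ 2 * (1 + |(k : ℝ)|) := by
  unfold freqWeight
  push_cast
  rw [abs_mul, abs_two]
  linarith [abs_nonneg (k : ℝ)]

theorem wtp_natCast (m : ℕ) (k : ℤ) : wtp m k = freqWeight k ^ (2 * m) := by
  rw [wtp_eq, ← Real.rpow_natCast]
  push_cast
  rfl

theorem wtp_neg_natCast (m : ℕ) (k : ℤ) : wtp (-m) k = (freqWeight k ^ (2 * m))⁻¹ := by
  rw [wtp_eq, ← Real.rpow_natCast, ← Real.rpow_neg (freqWeight_pos k).le]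
  push_cast
  ring_nf

theorem tsupport_iteratedDeriv_subset {𝕜 F : Type*} [NontriviallyNormedField 𝕜]
    [NormedAddCommGroup F] [NormedSpace 𝕜 F] (f : 𝕜 → F) (n : ℕ) :
    tsupport (iteratedDeriv n f) ⊆ tsupport f := by
  refine (closure_mono fun x hx => ?_).trans (tsupport_iteratedFDeriv_subset (𝕜 := 𝕜) n)
  simp only [mem_support, iteratedDeriv_eq_iteratedFDeriv] at hx ⊢
  exact fun h => hx (by simp [h])

section TestFunction

variable {φ : ℝ → ℂ}

theorem fourier_iteratedDeriv_apply (hφ : ContDiff ℝ ∞ φ) (hcs : HasCompactSupport φ) (n : ℕ)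
    (ξ : ℝ) : 𝓕 (iteratedDeriv n φ) ξ = (2 * π * I * ξ) ^ n * 𝓕 φ ξ := by
  have hint (k : ℕ) : Integrable (iteratedDeriv k φ) :=
    (hφ.continuous_iteratedDeriv k (mod_cast le_top)).integrable_of_hasCompactSupport
      (hcs.of_isClosed_subset (isClosed_tsupport _) (tsupport_iteratedDeriv_subset φ k))
  rw [Real.fourier_iteratedDeriv (N := ⊤) hφ (fun k _ => hint k) le_top]
  rfl

theorem fourier_iteratedDeriv_two_mul_neg (hφ : ContDiff ℝ ∞ φ) (hcs : HasCompactSupport φ)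
    (m : ℕ) (k : ℤ) :
    𝓕 (iteratedDeriv (2 * m) φ) (-k) = (-1) ^ m * (cplus m k * 𝓕 φ (-k)) := by
  have hsq : (2 * π * I * ((-k : ℝ) : ℂ)) ^ 2 = -((2 * π * k : ℝ) : ℂ) ^ 2 := by
    push_cast
    ring_nf
    rw [I_sq]
    ring
  rw [fourier_iteratedDeriv_apply hφ hcs, cplus, pow_mul, pow_mul, hsq, neg_pow]
  push_cast
  ring

theorem fourier_exp_smul {E : Type*} [NormedAddCommGroup E] [NormedSpace ℂ E] (f : ℝ → E)
    (a ξ : ℝ) : 𝓕 (fun x : ℝ => exp (2 * π * a * x * I) • f x) ξ = 𝓕 f (ξ - a) := by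
  simp only [Real.fourier_real_eq_integral_exp_smul, smul_smul, ← Complex.exp_add]
  congr 1
  ext x
  congr 2
  push_cast
  ring

theorem exists_bound_one_add_abs_pow_mul_norm_fourier (hφ : ContDiff ℝ ∞ φ)
    (hcs : HasCompactSupport φ) (n : ℕ) :
    ∃ C, ∀ ξ : ℝ, (1 + |ξ|) ^ n * ‖𝓕 φ ξ‖ ≤ C := by
  set ψ : 𝓢(ℝ, ℂ) := 𝓕 (hcs.toSchwartzMap hφ)
  refine ⟨2 ^ n * ((Finset.Iic (n, 0)).sup fun p => SchwartzMap.seminorm ℂ p.1 p.2) ψ,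
    fun ξ => ?_⟩
  have h := SchwartzMap.one_add_le_sup_seminorm_apply (𝕜 := ℂ) (m := (n, 0)) le_rfl le_rfl ψ ξ
  rwa [norm_iteratedFDeriv_zero] at h

theorem summable_norm_fourier_neg_mul_freqWeight_pow (hφ : ContDiff ℝ ∞ φ)
    (hcs : HasCompactSupport φ) (m : ℕ) :
    Summable fun k : ℤ => ‖𝓕 φ (-k)‖ * freqWeight k ^ m := by
  obtain ⟨C, hC⟩ := exists_bound_one_add_abs_pow_mul_norm_fourier hφ hcs (m + 2)
  refine Summable.of_norm_bounded_eventually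
    ((Real.summable_one_div_int_pow.2 one_lt_two).mul_left (2 ^ m * C)) ?_
  filter_upwards [Filter.eventually_cofinite_ne 0] with k hk
  have hk2 : (0 : ℝ) < (k : ℝ) ^ 2 := by positivity
  have hw : freqWeight k ^ m ≤ 2 ^ m * (1 + |(k : ℝ)|) ^ m := by
    rw [← mul_pow]
    exact pow_le_pow_left₀ (freqWeight_pos k).le (freqWeight_le k) m
  have hsq : (k : ℝ) ^ 2 ≤ (1 + |(k : ℝ)|) ^ 2 := by
    nlinarith [sq_abs (k : ℝ), abs_nonneg (k : ℝ)]
  have hdecay := hC (-k)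
  rw [abs_neg] at hdecay
  rw [Real.norm_of_nonneg (mul_nonneg (norm_nonneg _) (pow_nonneg (freqWeight_pos k).le m)),
    mul_one_div, le_div_iff₀ hk2]
  calc ‖𝓕 φ (-k)‖ * freqWeight k ^ m * (k : ℝ) ^ 2
      ≤ ‖𝓕 φ (-k)‖ * (2 ^ m * (1 + |(k : ℝ)|) ^ m) * (1 + |(k : ℝ)|) ^ 2 := by gcongr
    _ = 2 ^ m * ((1 + |(k : ℝ)|) ^ (m + 2) * ‖𝓕 φ (-k)‖) := by ring
    _ ≤ 2 ^ m * C := by gcongr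

end TestFunction

theorem summable_mul_mul_sub_of_summable_sq {ι : Type*} [AddGroup ι] {γ a b : ι → ℝ}
    (hγ : Summable γ) (hγ0 : ∀ k, 0 ≤ γ k) (ha : Summable fun k => a k ^ 2)
    (hb : Summable fun k => b k ^ 2) :
    Summable fun p : ι × ι => γ p.1 * (a (p.1 - p.2) * b p.2) := by
  have ha' (k : ι) : Summable fun j => a (k - j) ^ 2 := ha.comp_injective sub_right_injective
  have hbound : Summable fun p : ι × ι => γ p.1 * (a (p.1 - p.2) ^ 2 + b p.2 ^ 2) := by
    have h0 : 0 ≤ fun p : ι × ι => γ p.1 * (a (p.1 - p.2) ^ 2 + b p.2 ^ 2) :=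
      fun p => mul_nonneg (hγ0 p.1) (by positivity)
    refine (summable_prod_of_nonneg h0).2 ⟨fun k => ((ha' k).add hb).mul_left (γ k), ?_⟩
    refine (hγ.mul_right ((∑' l, a l ^ 2) + ∑' j, b j ^ 2)).congr fun k => ?_
    dsimp only
    rw [tsum_mul_left, (ha' k).tsum_add hb]
    exact congr_arg (fun t => γ k * (t + _)) ((Equiv.subLeft k).tsum_eq fun l => a l ^ 2).symm
  refine hbound.of_norm_bounded fun p => ?_
  rw [norm_mul, norm_mul, Real.norm_of_nonneg (hγ0 p.1)]
  gcongr ?_ * ?_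
  · exact hγ0 p.1
  · rw [Real.norm_eq_abs, Real.norm_eq_abs]
    nlinarith [sq_abs (a (p.1 - p.2)), sq_abs (b p.2), sq_nonneg (|a (p.1 - p.2)| - |b p.2|)]

theorem norm_mul_norm_le_freqWeight_pow (m : ℕ) (k j : ℤ) (x y : ℂ) :
    ‖x‖ * ‖y‖ ≤
      freqWeight k ^ m * (‖x‖ / freqWeight (k - j) ^ m * (‖y‖ * freqWeight j ^ m)) := by
  have hpos : 0 < freqWeight (k - j) ^ m := pow_pos (freqWeight_pos _) m
  have hpeetre : freqWeight (k - j) ^ m ≤ freqWeight k ^ m * freqWeight j ^ m := by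
    rw [← mul_pow]
    exact pow_le_pow_left₀ (freqWeight_pos _).le (freqWeight_sub_le k j) m
  calc ‖x‖ * ‖y‖ = ‖x‖ / freqWeight (k - j) ^ m * freqWeight (k - j) ^ m * ‖y‖ := by
        rw [div_mul_cancel₀ _ hpos.ne']
    _ ≤ ‖x‖ / freqWeight (k - j) ^ m * (freqWeight k ^ m * freqWeight j ^ m) * ‖y‖ := by
        gcongr
    _ = _ := by ring

theorem summable_mul_conv_terms {m : ℕ} {V u c : ℤ → ℂ}
    (hV : Summable fun k : ℤ => wtp (-(m : ℝ)) k * ‖V k‖ ^ 2)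
    (hu : Summable fun k : ℤ => wtp (m : ℝ) k * ‖u k‖ ^ 2)
    (hc : Summable fun k => ‖c k‖ * freqWeight k ^ m) :
    Summable fun p : ℤ × ℤ => c p.1 * (V (p.1 - p.2) * u p.2) := by
  have ha : Summable fun l => (‖V l‖ / freqWeight l ^ m) ^ 2 :=
    hV.congr fun l => by rw [wtp_neg_natCast, div_pow, ← pow_mul, mul_comm 2 m]; ring
  have hb : Summable fun j => (‖u j‖ * freqWeight j ^ m) ^ 2 :=
    hu.congr fun j => by rw [wtp_natCast, mul_pow, ← pow_mul, mul_comm 2 m]; ring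
  have hc0 (k : ℤ) : 0 ≤ ‖c k‖ * freqWeight k ^ m :=
    mul_nonneg (norm_nonneg _) (pow_nonneg (freqWeight_pos k).le m)
  refine (summable_mul_mul_sub_of_summable_sq hc hc0 ha hb).of_norm_bounded fun p => ?_
  rw [norm_mul, norm_mul, mul_assoc]
  exact mul_le_mul_of_nonneg_left (norm_mul_norm_le_freqWeight_pow m p.1 p.2 _ _) (norm_nonneg _)

def shearEquiv : ℤ × ℤ ≃ ℤ × ℤ where
  toFun p := (p.1 + p.2, p.2)
  invFun p := (p.1 - p.2, p.2)
  left_inv p := by simp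
  right_inv p := by simp

namespace FourierVanishesOn

variable {s : Set ℝ} {u : ℤ → ℂ}

theorem add {v : ℤ → ℂ} (hu : FourierVanishesOn u s) (hv : FourierVanishesOn v s) :
    FourierVanishesOn (fun k => u k + v k) s := fun φ hφ hcs hφs => by
  simpa only [mul_add, add_zero] using (hu φ hφ hcs hφs).add (hv φ hφ hcs hφs)

theorem cplus_mul (hu : FourierVanishesOn u s) (m : ℕ) :
    FourierVanishesOn (fun k => (cplus m k : ℂ) * u k) s := by
  intro φ hφ hcs hφs
  have hsupp := tsupport_iteratedDeriv_subset φ (2 * m)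
  have h := hu (iteratedDeriv (2 * m) φ)
    (by rw [iteratedDeriv_eq_iterate]; exact hφ.iterate_deriv _)
    (hcs.of_isClosed_subset (isClosed_tsupport _) hsupp) (hsupp.trans hφs)
  have hterm (k : ℤ) :
      𝓕 φ (-k) * (cplus m k * u k) = (-1) ^ m * (𝓕 (iteratedDeriv (2 * m) φ) (-k) * u k) := by
    have hsign : ((-1 : ℂ) ^ m) * (-1) ^ m = 1 := by rw [← mul_pow]; norm_num
    rw [fourier_iteratedDeriv_two_mul_neg hφ hcs]
    linear_combination (-(cplus m k : ℂ) * 𝓕 φ (-k) * u k) * hsign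
  simpa only [hterm, mul_zero] using h.mul_left ((-1) ^ m)

theorem hasSum_fourier_neg_add_mul (hu : FourierVanishesOn u s) {φ : ℝ → ℂ}
    (hφ : ContDiff ℝ ∞ φ) (hcs : HasCompactSupport φ) (hφs : tsupport φ ⊆ s) (l : ℤ) :
    HasSum (fun j : ℤ => 𝓕 φ (-((l + j : ℤ) : ℝ)) * u j) 0 := by
  have hexp : ContDiff ℝ ∞ fun x : ℝ => exp (2 * π * (l : ℝ) * x * I) :=
    ((contDiff_const.mul Complex.ofRealCLM.contDiff).mul contDiff_const).cexp
  have h := hu (fun x => exp (2 * π * (l : ℝ) * x * I) • φ x) (hexp.smul hφ)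
    (hcs.smul_left (f := fun x : ℝ => exp (2 * π * (l : ℝ) * x * I)))
    ((tsupport_smul_subset_right _ φ).trans hφs)
  simp only [fourier_exp_smul] at h
  convert h using 4 with j
  push_cast
  ring

theorem conv {m : ℕ} {V : ℤ → ℂ} (hV : Summable fun k : ℤ => wtp (-(m : ℝ)) k * ‖V k‖ ^ 2)
    (hu : Summable fun k : ℤ => wtp (m : ℝ) k * ‖u k‖ ^ 2) (hvan : FourierVanishesOn u s) :
    FourierVanishesOn (_root_.conv V u) s := by
  intro φ hφ hcs hφs
  set P : ℤ × ℤ → ℂ := fun p => 𝓕 φ (-p.1) * (V (p.1 - p.2) * u p.2)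
  have hP : Summable P := summable_mul_conv_terms (c := fun k : ℤ => 𝓕 φ (-k)) hV hu
    (summable_norm_fourier_neg_mul_freqWeight_pow hφ hcs m)
  have hsheared (l : ℤ) : HasSum (fun j => P (shearEquiv (l, j))) 0 := by
    simpa [P, shearEquiv, mul_left_comm _ (V l)] using
      (hvan.hasSum_fourier_neg_add_mul hφ hcs hφs l).mul_left (V l)
  have hsum : ∑' p, P p = 0 :=
    ((shearEquiv.hasSum_iff.2 hP.hasSum).prod_fiberwise hsheared).unique hasSum_zero
  have hrows (k : ℤ) : HasSum (fun j => P (k, j)) (𝓕 φ (-k) * _root_.conv V u k) := by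
    simpa only [P, _root_.conv, tsum_mul_left] using (hP.prod_factor k).hasSum
  simpa only [hsum] using hP.hasSum.prod_fiberwise hrows

end FourierVanishesOn

theorem locality_general (m : ℕ) (V u w : ℤ → ℂ)
    (hV : Summable fun k : ℤ => wtp (-(m : ℝ)) k * ‖V k‖ ^ 2)
    -- u ∈ H₊^m
    (hu : Summable fun k : ℤ => wtp (m : ℝ) k * ‖u k‖ ^ 2)
    -- w = S₊(V)u = D₊^{2m}u + V·u, and w ∈ L²
    (hSu : ∀ k : ℤ, w k = ((cplus m k : ℝ) : ℂ) * u k + conv V u k)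
    -- U, W : the realizations of u and S₊u as functions in L²(0,1)
    (U W : Lp ℂ 2 (@haarAddCircle (1 : ℝ) _))
    (hU : ∀ k : ℤ, fourierCoeff (U : AddCircle (1 : ℝ) → ℂ) k = u k)
    (hW : ∀ k : ℤ, fourierCoeff (W : AddCircle (1 : ℝ) → ℂ) k = w k) :
    ∀ α β : ℝ, 0 ≤ α → β ≤ 1 → α < β →
      (∀ᵐ x : ℝ ∂(volume.restrict (Set.Ioo α β)), U (x : AddCircle (1 : ℝ)) = 0) →
      (∀ᵐ x : ℝ ∂(volume.restrict (Set.Ioo α β)), W (x : AddCircle (1 : ℝ)) = 0) := by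
  intro α β hα hβ _ hU0
  have hs : Ioo α β ⊆ Ioc 0 1 := fun x hx => ⟨hα.trans_lt hx.1, hx.2.le.trans hβ⟩
  have hu_van : FourierVanishesOn u (Ioo α β) := by
    simpa only [hU] using (fourierVanishesOn_fourierCoeff_iff U isOpen_Ioo hs).2 hU0
  refine (fourierVanishesOn_fourierCoeff_iff W isOpen_Ioo hs).1 ?_
  simpa only [hW, hSu] using (hu_van.cplus_mul m).add (hu_van.conv hV hu)

theorem locality (m : ℕ) (hm : 1 ≤ m) (V u w : ℤ → ℂ)
    (hV : Summable fun k : ℤ => wtp (-(m : ℝ)) k * ‖V k‖ ^ 2)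
    -- u ∈ H₊^m
    (hu : Summable fun k : ℤ => wtp (m : ℝ) k * ‖u k‖ ^ 2)
    -- w = S₊(V)u = D₊^{2m}u + V·u, and w ∈ L²
    (hw : Summable fun k : ℤ => ‖w k‖ ^ 2)
    (hSu : ∀ k : ℤ, w k = ((cplus m k : ℝ) : ℂ) * u k + conv V u k)
    -- U, W : the realizations of u and S₊u as functions in L²(0,1)
    (U W : Lp ℂ 2 (@haarAddCircle (1 : ℝ) _))
    (hU : ∀ k : ℤ, fourierCoeff (U : AddCircle (1 : ℝ) → ℂ) k = u k)
    (hW : ∀ k : ℤ, fourierCoeff (W : AddCircle (1 : ℝ) → ℂ) k = w k) :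
    ∀ α β : ℝ, 0 ≤ α → β ≤ 1 → α < β →
      (∀ᵐ x : ℝ ∂(volume.restrict (Set.Ioo α β)), U (x : AddCircle (1 : ℝ)) = 0) →
      (∀ᵐ x : ℝ ∂(volume.restrict (Set.Ioo α β)), W (x : AddCircle (1 : ℝ)) = 0) :=
  locality_general m V u w hV hu hSu U W hU hW
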